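/- arXiv:2309.10521 — 7 statements merged into one kernel-verified Lean document; each statement's English description precedes it below -/
import Mathlib

section
/- Let h : ℤ → ℤ≥0 with h(j) = 0 for j ≪ 0, and let d = qdepth(h), i.e. the maximal d such that β_k^d(h) ≥ 0 for all k ≤ d. Then for all integers k ≤ d' ≤ d one has β_k^{d'}(h) ≥ β_k^d(h) ≥ 0. -/
/-- `β_k^d(h) = Σ_{j ≤ k} (-1)^{k-j} C(d-j, k-j) h(j)` (a finite sum when `h`
vanishes for `j ≪ 0`). -/
noncomputable def beta (h : ℤ → ℤ) (d k : ℤ) : ℤ :=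
  ∑ᶠ j ∈ Set.Iic k, (-1 : ℤ) ^ (k - j).toNat * ((d - j).toNat.choose (k - j).toNat : ℤ) * h j

/-- The set of `d` such that `β_k^d(h) ≥ 0` for all `k ≤ d`; its maximum is `qdepth h`. -/
def qdepthSet (h : ℤ → ℤ) : Set ℤ := {d : ℤ | ∀ k ≤ d, 0 ≤ beta h d k}

/-!
Pascal's rule for the binomial coefficients gives `β_k^d = β_k^{d+1} + β_{k-1}^d` for `k ≤ d`.
Upward induction on `k` (starting below the support of `h`) then shows that `qdepthSet h` is a
lower set, and downward induction on `d'` shows that `β_k^{d'}` grows as `d'` decreases, each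
step adding some `β_{k-1}^{d'} ≥ 0`.
-/

section

variable {h : ℤ → ℤ} {N : ℤ}

lemma beta_eq_sum (hvan : ∀ j < N, h j = 0) (d k : ℤ) :
    beta h d k = ∑ j ∈ Finset.Icc N k,
      (-1 : ℤ) ^ (k - j).toNat * ((d - j).toNat.choose (k - j).toNat : ℤ) * h j := by
  refine finsum_mem_eq_sum_of_inter_support_eq _ (Set.ext fun j => ?_)
  simp only [Set.mem_inter_iff, Set.mem_Iic, Function.mem_support, Finset.coe_Icc, Set.mem_Icc]
  constructor
  · rintro ⟨hjk, hj⟩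
    refine ⟨⟨not_lt.mp fun hjN => hj ?_, hjk⟩, hj⟩
    rw [hvan j hjN, mul_zero]
  · rintro ⟨⟨-, hjk⟩, hj⟩
    exact ⟨hjk, hj⟩

lemma beta_eq_zero_of_lt (hvan : ∀ j < N, h j = 0) {d k : ℤ} (hk : k < N) : beta h d k = 0 := by
  rw [beta_eq_sum hvan, Finset.Icc_eq_empty_of_lt hk, Finset.sum_empty]

lemma beta_eq_beta_add_one_add_beta_sub_one (hvan : ∀ j < N, h j = 0) {d k : ℤ} (hk : k ≤ d) :
    beta h d k = beta h (d + 1) k + beta h d (k - 1) := by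
  rcases lt_or_ge k N with hkN | hNk
  · simp only [beta_eq_zero_of_lt hvan hkN, beta_eq_zero_of_lt hvan (by omega : k - 1 < N),
      add_zero]
  simp only [beta_eq_sum hvan, ← Finset.insert_Icc_sub_one_right_eq_Icc hNk,
    Finset.sum_insert (by simp : k ∉ Finset.Icc N (k - 1)), sub_self, Int.toNat_zero, pow_zero,
    Nat.choose_zero_right, add_assoc, ← Finset.sum_add_distrib]
  congr 1
  refine Finset.sum_congr rfl fun j hj => ?_
  have hjk : j ≤ k - 1 := (Finset.mem_Icc.mp hj).2
  rw [show (k - j).toNat = (k - 1 - j).toNat + 1 by omega,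
    show (d + 1 - j).toNat = (d - j).toNat + 1 by omega, Nat.choose_succ_succ, pow_succ]
  push_cast
  ring

lemma mem_qdepthSet_of_add_one_mem (hvan : ∀ j < N, h j = 0) {d : ℤ}
    (hd : d + 1 ∈ qdepthSet h) : d ∈ qdepthSet h := by
  intro k hkd
  rcases lt_or_ge k (N - 1) with hkN | hNk
  · exact (beta_eq_zero_of_lt hvan (by omega)).ge
  induction k, hNk using Int.leInduction with
  | base => exact (beta_eq_zero_of_lt hvan (sub_one_lt N)).ge
  | succ k _ ih =>
    rw [beta_eq_beta_add_one_add_beta_sub_one hvan hkd, add_sub_cancel_right]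
    exact add_nonneg (hd _ (by omega)) (ih (by omega))

lemma isLowerSet_qdepthSet (hvan : ∀ j < N, h j = 0) : IsLowerSet (qdepthSet h) := by
  intro d d' hd'd hd
  induction d', hd'd using Int.leInductionDown with
  | base => exact hd
  | pred d' _ ih => exact mem_qdepthSet_of_add_one_mem hvan (by rwa [sub_add_cancel])

lemma beta_le_beta_of_le (hvan : ∀ j < N, h j = 0) {d d' k : ℤ} (hd : d ∈ qdepthSet h)
    (hkd' : k ≤ d') (hd'd : d' ≤ d) : beta h d k ≤ beta h d' k := by
  induction d', hd'd using Int.leInductionDown with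
  | base => exact le_rfl
  | pred d' hd'd ih =>
    rw [beta_eq_beta_add_one_add_beta_sub_one hvan hkd', sub_add_cancel]
    have hpred : d' - 1 ∈ qdepthSet h := isLowerSet_qdepthSet hvan (by omega) hd
    exact le_add_of_le_of_nonneg (ih (by omega)) (hpred _ (by omega))

end

theorem beta_monotone_general (h : ℤ → ℤ)
    (hvan : ∃ N : ℤ, ∀ j < N, h j = 0)
    (d : ℤ) (hd : IsGreatest (qdepthSet h) d) :
    ∀ k d' : ℤ, k ≤ d' → d' ≤ d → 0 ≤ beta h d k ∧ beta h d k ≤ beta h d' k := by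
  obtain ⟨N, hvan⟩ := hvan
  intro k d' hkd' hd'd
  exact ⟨hd.1 k (hkd'.trans hd'd), beta_le_beta_of_le hvan hd.1 hkd' hd'd⟩

theorem beta_monotone (h : ℤ → ℤ) (hne : h ≠ 0) (hnn : ∀ j, 0 ≤ h j)
    (hvan : ∃ N : ℤ, ∀ j < N, h j = 0)
    (d : ℤ) (hd : IsGreatest (qdepthSet h) d) :
    ∀ k d' : ℤ, k ≤ d' → d' ≤ d → 0 ≤ beta h d k ∧ beta h d k ≤ beta h d' k :=
  beta_monotone_general h hvan d hd
end

section
/- Let h : ℤ → ℤ≥0 be nonzero with h(j) = 0 for j ≪ 0, k₀ = min{j : h(j) > 0}, h₀ = h(k₀), h₁ = h(k₀+1). Then qdepth(h) = k₀ if and only if h₀ > h₁. -/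
/-!
Since `h` vanishes below `k₀`, `β_k^d(h) = 0` for `k < k₀`, `β_{k₀}^d(h) = h₀` and
`β_{k₀+1}^d(h) = h₁ - (d - k₀) h₀`. So `k₀` always lies in the qdepth set, any member `d > k₀`
forces `h₁ ≥ (d - k₀) h₀ ≥ h₀`, and conversely `h₁ ≥ h₀` puts `k₀ + 1` in it.
-/

section VanishingBelow

variable {h : ℤ → ℤ} {a : ℤ}

lemma beta_eq_sum_Icc (h0 : ∀ j < a, h j = 0) (d k : ℤ) :
    beta h d k = ∑ j ∈ Finset.Icc a k,
      (-1 : ℤ) ^ (k - j).toNat * ((d - j).toNat.choose (k - j).toNat : ℤ) * h j := by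
  apply finsum_mem_eq_sum_of_inter_support_eq
  ext j
  simp only [Set.mem_inter_iff, Function.mem_support, Finset.coe_Icc, Set.mem_Icc, Set.mem_Iic]
  refine ⟨fun ⟨hjk, hne⟩ => ⟨⟨?_, hjk⟩, hne⟩, fun ⟨⟨_, hjk⟩, hne⟩ => ⟨hjk, hne⟩⟩
  by_contra hja
  exact hne (by simp [h0 j (not_le.mp hja)])

lemma beta_of_lt (h0 : ∀ j < a, h j = 0) (d : ℤ) {k : ℤ} (hk : k < a) : beta h d k = 0 := by
  rw [beta_eq_sum_Icc h0, Finset.Icc_eq_empty (not_le.mpr hk), Finset.sum_empty]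

lemma beta_self (h0 : ∀ j < a, h j = 0) (d : ℤ) : beta h d a = h a := by
  simp [beta_eq_sum_Icc h0]

lemma beta_add_one (h0 : ∀ j < a, h j = 0) (d : ℤ) :
    beta h d (a + 1) = h (a + 1) - ((d - a).toNat : ℤ) * h a := by
  have hIcc : Finset.Icc a (a + 1) = {a, a + 1} := by
    ext x
    simp only [Finset.mem_Icc, Finset.mem_insert, Finset.mem_singleton]
    omega
  rw [beta_eq_sum_Icc h0, hIcc, Finset.sum_pair (by omega)]
  simp only [add_sub_cancel_left, sub_self, Int.toNat_one, Int.toNat_zero, pow_one, pow_zero,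
    Nat.choose_one_right, Nat.choose_zero_right, Nat.cast_one]
  ring

lemma beta_nonneg_of_le (h0 : ∀ j < a, h j = 0) (ha : 0 ≤ h a) (d : ℤ) {k : ℤ} (hk : k ≤ a) :
    0 ≤ beta h d k := by
  rcases hk.lt_or_eq with hk | rfl
  · exact (beta_of_lt h0 d hk).ge
  · exact (beta_self h0 d).symm ▸ ha

lemma mem_qdepthSet_of_vanishing_below (h0 : ∀ j < a, h j = 0) (ha : 0 ≤ h a) :
    a ∈ qdepthSet h :=
  fun _ hk => beta_nonneg_of_le h0 ha a hk

lemma add_one_mem_qdepthSet (h0 : ∀ j < a, h j = 0) (ha : 0 ≤ h a) (hle : h a ≤ h (a + 1)) :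
    a + 1 ∈ qdepthSet h := by
  intro k hk
  rcases hk.lt_or_eq with hk | rfl
  · exact beta_nonneg_of_le h0 ha _ (Int.lt_add_one_iff.mp hk)
  · rw [beta_add_one h0, add_sub_cancel_left]
    simpa using hle

lemma le_of_lt_mem_qdepthSet (h0 : ∀ j < a, h j = 0) (ha : 0 ≤ h a) {d : ℤ}
    (hd : d ∈ qdepthSet h) (had : a < d) : h a ≤ h (a + 1) := by
  have hβ := hd (a + 1) had
  rw [beta_add_one h0] at hβ
  have hda : (1 : ℤ) ≤ (d - a).toNat := by omega
  nlinarith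

end VanishingBelow

theorem qdepth_eq_k0_iff_general (h : ℤ → ℤ) (hnn : ∀ j, 0 ≤ h j)
    (k₀ : ℤ) (hk0 : IsLeast {j : ℤ | 0 < h j} k₀)
    (d : ℤ) (hd : IsGreatest (qdepthSet h) d) :
    d = k₀ ↔ h (k₀ + 1) < h k₀ := by
  have h0 : ∀ j < k₀, h j = 0 := fun j hj =>
    ((hnn j).lt_or_eq.resolve_left fun hpos => (hk0.2 hpos).not_gt hj).symm
  have hk₀d : k₀ ≤ d := hd.2 (mem_qdepthSet_of_vanishing_below h0 (hnn k₀))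
  rw [← not_le]
  constructor
  · rintro rfl hle
    exact (hd.2 (add_one_mem_qdepthSet h0 (hnn d) hle)).not_gt (lt_add_one d)
  · intro hlt
    by_contra hne
    exact hlt (le_of_lt_mem_qdepthSet h0 (hnn k₀) hd.1 (lt_of_le_of_ne hk₀d (Ne.symm hne)))

theorem qdepth_eq_k0_iff (h : ℤ → ℤ) (hne : h ≠ 0) (hnn : ∀ j, 0 ≤ h j)
    (hvan : ∃ N : ℤ, ∀ j < N, h j = 0)
    (k₀ : ℤ) (hk0 : IsLeast {j : ℤ | 0 < h j} k₀)
    (d : ℤ) (hd : IsGreatest (qdepthSet h) d) :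
    d = k₀ ↔ h (k₀ + 1) < h k₀ :=
  qdepth_eq_k0_iff_general h hnn k₀ hk0 d hd
end

section
/- Let h : ℤ → ℤ≥0 be nonzero with h(j) = 0 for j ≪ 0, k₀ = min{j : h(j) > 0}, h₀ = h(k₀), and d = qdepth(h). Then for every integer k with k₀ ≤ k ≤ d, one has h(k) ≥ C(d − k₀, k − k₀) · h₀. -/
open Finset


/-- Key binomial identity. -/
lemma keyB (M N : ℕ) (hNM : N ≤ M) :
    ∑ a ∈ range (N+1), (-1:ℤ)^a * (M.choose a) * ((M-a).choose (N-a))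
      = if N = 0 then 1 else 0 := by
  have : ∀ a ∈ range (N+1), (-1:ℤ)^a * (M.choose a) * ((M-a).choose (N-a))
      = (M.choose N) * ((-1:ℤ)^a * (N.choose a)) := by
    intro a ha
    rw [mem_range] at ha
    have ha' : a ≤ N := Nat.lt_succ_iff.mp ha
    have := Nat.choose_mul (n := M) ha'
    have h2 : ((M.choose N : ℤ)) * (N.choose a) = (M.choose a) * ((M-a).choose (N-a)) := by
      exact_mod_cast congrArg (Nat.cast : ℕ → ℤ) this
    rcases Nat.even_or_odd a with he | ho
    · rw [he.neg_one_pow]; linarith [h2]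
    · rw [ho.neg_one_pow]; linarith [h2]
  rw [Finset.sum_congr rfl this, ← Finset.mul_sum, Int.alternating_sum_range_choose]
  split_ifs with h
  · subst h; simp
  · ring

/-- Binomial inversion identity. -/
lemma inversion (m : ℕ) (g : ℕ → ℤ) (n : ℕ) (hnm : n ≤ m) :
    ∑ j ∈ range (n+1), ((m-j).choose (n-j) : ℤ) *
      (∑ i ∈ range (j+1), (-1:ℤ)^(j-i) * ((m-i).choose (j-i)) * g i) = g n := by
  have swap :
      ∑ j ∈ range (n+1), ∑ i ∈ range (j+1),
          ((m-j).choose (n-j) : ℤ) * ((-1:ℤ)^(j-i) * ((m-i).choose (j-i)) * g i)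
        = ∑ i ∈ range (n+1), ∑ j ∈ Icc i n,
          ((m-j).choose (n-j) : ℤ) * ((-1:ℤ)^(j-i) * ((m-i).choose (j-i)) * g i) := by
    refine Finset.sum_comm' ?_
    intro j i
    simp only [mem_range, mem_Icc]
    omega
  calc ∑ j ∈ range (n+1), ((m-j).choose (n-j) : ℤ) *
        (∑ i ∈ range (j+1), (-1:ℤ)^(j-i) * ((m-i).choose (j-i)) * g i)
      = ∑ j ∈ range (n+1), ∑ i ∈ range (j+1),
          ((m-j).choose (n-j) : ℤ) * ((-1:ℤ)^(j-i) * ((m-i).choose (j-i)) * g i) := by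
        simp_rw [Finset.mul_sum]
    _ = ∑ i ∈ range (n+1), ∑ j ∈ Icc i n,
          ((m-j).choose (n-j) : ℤ) * ((-1:ℤ)^(j-i) * ((m-i).choose (j-i)) * g i) := swap
    _ = ∑ i ∈ range (n+1), (if i = n then 1 else 0) * g i := by
        refine Finset.sum_congr rfl ?_
        intro i hi
        rw [mem_range] at hi
        have hin : i ≤ n := Nat.lt_succ_iff.mp hi
        have : ∑ j ∈ Icc i n,
            ((m-j).choose (n-j) : ℤ) * ((-1:ℤ)^(j-i) * ((m-i).choose (j-i)) * g i)
            = (∑ a ∈ range (n+1-i),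
                (-1:ℤ)^a * ((m-i).choose a) * (((m-i)-a).choose ((n-i)-a))) * g i := by
          rw [Finset.sum_mul]
          rw [show Icc i n = Ico i (n+1) from rfl]
          rw [Finset.sum_Ico_eq_sum_range]
          refine Finset.sum_congr rfl ?_
          intro a ha
          rw [mem_range] at ha
          have h1 : i + a - i = a := by omega
          have h2 : m - (i + a) = m - i - a := by omega
          have h3 : n - (i + a) = n - i - a := by omega
          rw [h1, h2, h3]
          ring
        rw [this, show n+1-i = (n-i)+1 by omega, keyB (m-i) (n-i) (by omega)]
        congr 1
        by_cases h : i = n <;> simp [h] <;> omega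
    _ = g n := by
        rw [Finset.sum_eq_single_of_mem n (self_mem_range_succ n)]
        · simp
        · intro b _ hb; simp [hb]

lemma core (m : ℕ) (g : ℕ → ℤ) (hg : ∀ i, 0 ≤ g i)
    (hB : ∀ n, n ≤ m → 0 ≤ ∑ i ∈ range (n+1), (-1:ℤ)^(n-i) * ((m-i).choose (n-i)) * g i)
    (n : ℕ) (hnm : n ≤ m) : (m.choose n : ℤ) * g 0 ≤ g n := by
  rw [← inversion m g n hnm]
  have h0 : ((m-0).choose (n-0) : ℤ) *
      (∑ i ∈ range (0+1), (-1:ℤ)^(0-i) * ((m-i).choose (0-i)) * g i)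
      = (m.choose n : ℤ) * g 0 := by simp
  rw [← h0]
  refine Finset.single_le_sum (f := fun j => ((m-j).choose (n-j) : ℤ) *
      (∑ i ∈ range (j+1), (-1:ℤ)^(j-i) * ((m-i).choose (j-i)) * g i)) ?_ (mem_range.mpr (by omega))
  intro j hj
  rw [mem_range] at hj
  exact mul_nonneg (by positivity) (hB j (by omega))



lemma bridge (h : ℤ → ℤ) (k₀ d : ℤ) (hlow : ∀ j, j < k₀ → h j = 0) (n : ℕ)
    (hnd : k₀ + n ≤ d) :
    beta h d (k₀ + n) = ∑ i ∈ range (n+1),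
      (-1:ℤ)^(n-i) * ((((d - k₀).toNat - i).choose (n-i)) : ℤ) * h (k₀ + i) := by
  unfold beta
  rw [finsum_mem_eq_sum_of_inter_support_eq _
    (t := Finset.Icc k₀ (k₀ + n)) ?_]
  · refine Finset.sum_nbij' (fun j => (j - k₀).toNat) (fun a => k₀ + a) ?_ ?_ ?_ ?_ ?_
    · intro a ha; rw [Finset.mem_Icc] at ha; rw [mem_range]; omega
    · intro a ha; rw [mem_range] at ha; rw [Finset.mem_Icc]; omega
    · intro a ha; rw [Finset.mem_Icc] at ha; omega
    · intro a ha; rw [mem_range] at ha; omega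
    · intro j hj
      rw [Finset.mem_Icc] at hj
      have h1 : (k₀ + (n:ℤ) - j).toNat = n - (j - k₀).toNat := by omega
      have h2 : (d - j).toNat = (d - k₀).toNat - (j - k₀).toNat := by omega
      have h3 : k₀ + ((j - k₀).toNat : ℤ) = j := by omega
      rw [h1, h2, h3]
  · ext j
    simp only [Set.mem_inter_iff, Set.mem_Iic, Function.mem_support, Finset.coe_Icc,
      Set.mem_Icc]
    constructor
    · rintro ⟨hj, hs⟩
      refine ⟨⟨?_, hj⟩, hs⟩
      by_contra hc
      push_neg at hc
      exact hs (by rw [hlow j hc]; ring)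
    · rintro ⟨hj, hs⟩; exact ⟨hj.2, hs⟩

theorem qdepth_necessary (h : ℤ → ℤ) (hne : h ≠ 0) (hnn : ∀ j, 0 ≤ h j)
    (hvan : ∃ N : ℤ, ∀ j < N, h j = 0)
    (k₀ : ℤ) (hk0 : IsLeast {j : ℤ | 0 < h j} k₀)
    (d : ℤ) (hd : IsGreatest (qdepthSet h) d) :
    ∀ k : ℤ, k₀ ≤ k → k ≤ d →
      ((d - k₀).toNat.choose (k - k₀).toNat : ℤ) * h k₀ ≤ h k := by
  intro k hk₀k hkd
  have hk0d : k₀ ≤ d := le_trans hk₀k hkd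
  have hlow : ∀ j, j < k₀ → h j = 0 := by
    intro j hj
    by_contra hc
    have : 0 < h j := lt_of_le_of_ne (hnn j) (Ne.symm hc)
    exact absurd (hk0.2 this) (by omega)
  set m : ℕ := (d - k₀).toNat with hm
  set g : ℕ → ℤ := fun i => h (k₀ + i) with hgdef
  have hB : ∀ n, n ≤ m → 0 ≤ ∑ i ∈ range (n+1), (-1:ℤ)^(n-i) * ((m-i).choose (n-i)) * g i := by
    intro n hn
    rw [← bridge h k₀ d hlow n (by omega)]
    exact hd.1 (k₀ + n) (by omega)
  set n : ℕ := (k - k₀).toNat with hn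
  have hk : k = k₀ + n := by omega
  have := core m g (fun i => hnn _) hB n (by omega)
  simpa [hgdef, hk] using this
end

section
/- Let h : ℤ → ℤ≥0 be nonzero with h(j) = 0 for j ≪ 0, and k₀ = min{j : h(j) > 0}. Let d be an integer such that h(k) ≥ (d − k + 1) · h(k−1) for all k with k₀ + 1 ≤ k ≤ d. Then qdepth(h) ≥ d, i.e. β_k^d(h) ≥ 0 for all k ≤ d. -/
private lemma choose_succ_le (a b : ℕ) : ((a + 1).choose (b + 1) : ℤ) ≤ (a + 1) * a.choose b := by
  have h1 : (a + 1) * a.choose b = (a + 1).choose (b + 1) * (b + 1) :=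
    Nat.add_one_mul_choose_eq a b
  have h2 : (a + 1).choose (b + 1) ≤ (a + 1).choose (b + 1) * (b + 1) :=
    Nat.le_mul_of_pos_right _ (Nat.succ_pos b)
  exact_mod_cast h1 ▸ h2

theorem qdepth_sufficient (h : ℤ → ℤ) (hne : h ≠ 0) (hnn : ∀ j, 0 ≤ h j)
    (hvan : ∃ N : ℤ, ∀ j < N, h j = 0)
    (k₀ : ℤ) (hk0 : IsLeast {j : ℤ | 0 < h j} k₀)
    (d : ℤ) (hgrow : ∀ k : ℤ, k₀ + 1 ≤ k → k ≤ d → (d - k + 1) * h (k - 1) ≤ h k) :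
    ∀ k ≤ d, 0 ≤ beta h d k := by
  intro k hkd
  -- h vanishes below k₀
  have hvan0 : ∀ j < k₀, h j = 0 := by
    intro j hj
    by_contra hne'
    exact absurd (hk0.2 (lt_of_le_of_ne (hnn j) (Ne.symm hne'))) (by omega)
  set f : ℤ → ℤ := fun j =>
    (-1 : ℤ) ^ (k - j).toNat * ((d - j).toNat.choose (k - j).toNat : ℤ) * h j with hf
  -- pair lemma
  have pair : ∀ n : ℕ, ∀ j : ℤ, k₀ + 1 ≤ j → j ≤ k → k - j = 2 * n →
      0 ≤ f (j - 1) + f j := by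
    intro n j hj1 hjk hpar
    have hd : 0 ≤ d - j := by omega
    set a := (d - j).toNat with ha
    set b := (k - j).toNat with hb
    have hb2 : b = 2 * n := by omega
    have h1 : (k - (j - 1)).toNat = b + 1 := by omega
    have h2 : (d - (j - 1)).toNat = a + 1 := by omega
    have hgj := hgrow j hj1 (by omega)
    have hda : d - j + 1 = (a : ℤ) + 1 := by omega
    have hsign1 : ((-1 : ℤ)) ^ b = 1 := by rw [hb2, pow_mul]; norm_num
    have hsign2 : ((-1 : ℤ)) ^ (b + 1) = -1 := by rw [pow_succ, hsign1]; norm_num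
    have hch := choose_succ_le a b
    have hnnj := hnn (j - 1)
    have key : ((a + 1).choose (b + 1) : ℤ) * h (j - 1) ≤ (a.choose b : ℤ) * h j := by
      calc ((a + 1).choose (b + 1) : ℤ) * h (j - 1)
          ≤ ((a : ℤ) + 1) * a.choose b * h (j - 1) := by nlinarith
        _ = (a.choose b : ℤ) * (((a : ℤ) + 1) * h (j - 1)) := by ring
        _ ≤ (a.choose b : ℤ) * h j := by
            have : ((a : ℤ) + 1) * h (j - 1) ≤ h j := by rw [← hda]; linarith
            nlinarith [Nat.zero_le (a.choose b)]
    simp only [hf, h1, h2, ← ha, ← hb, hsign1, hsign2]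
    nlinarith
  -- induction: sums of full pairs are nonnegative
  have main : ∀ n : ℕ, k₀ ≤ k + 1 - 2 * n →
      0 ≤ ∑ j ∈ Finset.Icc (k + 1 - 2 * n) k, f j := by
    intro n
    induction n with
    | zero => simp
    | succ n ih =>
      intro hlow
      have hsplit : Finset.Icc (k + 1 - 2 * (n + 1 : ℕ)) k =
          insert (k - 1 - 2 * n) (insert (k - 2 * n) (Finset.Icc (k + 1 - 2 * n) k)) := by
        ext x
        simp only [Finset.mem_Icc, Finset.mem_insert]
        push_cast
        omega
      rw [hsplit]
      rw [Finset.sum_insert (by simp only [Finset.mem_insert, Finset.mem_Icc]; push_cast; omega),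
        Finset.sum_insert (by simp only [Finset.mem_Icc]; omega)]
      have hp := pair n (k - 2 * n) (by push_cast at hlow ⊢; omega) (by omega) (by push_cast; ring)
      have : (k - 2 * n) - 1 = k - 1 - 2 * n := by ring
      rw [this] at hp
      have hih := ih (by push_cast at hlow ⊢; omega)
      linarith
  -- rewrite beta as a finite sum over Icc k₀ k
  have hbeta : beta h d k = ∑ j ∈ Finset.Icc k₀ k, f j := by
    rw [beta]
    refine finsum_mem_eq_sum_of_inter_support_eq _ ?_
    ext x
    simp only [Set.mem_inter_iff, Set.mem_Iic, Function.mem_support, Finset.coe_Icc,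
      Set.mem_Icc]
    constructor
    · rintro ⟨hx, hne'⟩
      refine ⟨⟨?_, hx⟩, hne'⟩
      by_contra hlt
      exact hne' (by simp [hf, hvan0 x (by omega)])
    · rintro ⟨⟨_, hx⟩, hne'⟩
      exact ⟨hx, hne'⟩
  rw [hbeta]
  rcases lt_or_ge k k₀ with hlt | hge
  · rw [Finset.Icc_eq_empty (by omega)]; simp
  · rcases Int.even_or_odd (k - k₀) with ⟨n, hn⟩ | ⟨n, hn⟩
    · -- k - k₀ = 2n : one leftover term at bottom, pairs above
      have hn0 : 0 ≤ n := by omega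
      obtain ⟨m, hm⟩ := Int.eq_ofNat_of_zero_le hn0
      have hsplit : Finset.Icc k₀ k = insert k₀ (Finset.Icc (k + 1 - 2 * m) k) := by
        ext x
        simp only [Finset.mem_Icc, Finset.mem_insert]
        push_cast
        omega
      rw [hsplit, Finset.sum_insert (by simp only [Finset.mem_Icc]; push_cast; omega)]
      have hterm : 0 ≤ f k₀ := by
        have : ((-1 : ℤ)) ^ (k - k₀).toNat = 1 := by
          have : (k - k₀).toNat = 2 * m := by push_cast at hm; omega
          rw [this, pow_mul]; norm_num
        simp only [hf, this, one_mul]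
        have := hnn k₀
        positivity
      have := main m (by push_cast; omega)
      linarith
    · -- k - k₀ = 2n + 1 : full pairs
      have hn0 : 0 ≤ n + 1 := by omega
      obtain ⟨m, hm⟩ := Int.eq_ofNat_of_zero_le hn0
      have hsplit : Finset.Icc k₀ k = Finset.Icc (k + 1 - 2 * m) k := by
        congr 1
        push_cast at hm ⊢
        omega
      rw [hsplit]
      exact main m (by push_cast at hm ⊢; omega)
end

section
/- Let a and r be positive integers and define h(j) = a·r^j for j ≥ 0 and h(j) = 0 for j < 0. Then qdepth(h) = r. -/
lemma beta_eq (a r : ℕ) (h : ℤ → ℤ)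
    (hh : ∀ j : ℤ, h j = if 0 ≤ j then (a : ℤ) * (r : ℤ) ^ j.toNat else 0)
    (d : ℤ) (n : ℕ) :
    beta h d (n : ℤ) = ∑ m ∈ Finset.range (n+1),
      (-1 : ℤ) ^ (n - m) * ((d - m).toNat.choose (n - m) : ℤ) * ((a:ℤ) * (r:ℤ) ^ m) := by
  have key : beta h d (n : ℤ) = ∑ j ∈ Finset.map ⟨(Nat.cast : ℕ → ℤ), Nat.cast_injective⟩
      (Finset.range (n+1)),
      (-1 : ℤ) ^ ((n:ℤ) - j).toNat * (((d - j).toNat.choose ((n:ℤ) - j).toNat : ℤ)) * h j := by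
    apply finsum_mem_eq_sum_of_inter_support_eq
    ext x
    simp only [Set.mem_inter_iff, Set.mem_Iic, Function.mem_support, Finset.coe_map,
      Finset.coe_range, Set.mem_image, Set.mem_Iio, Function.Embedding.coeFn_mk]
    constructor
    · rintro ⟨hx, hne⟩
      have hx0 : 0 ≤ x := by
        by_contra hx0
        exact hne (by rw [hh x, if_neg hx0]; ring)
      exact ⟨⟨x.toNat, by omega, by omega⟩, hne⟩
    · rintro ⟨⟨m, hm, rfl⟩, hne⟩
      exact ⟨by omega, hne⟩
  rw [key, Finset.sum_map]
  apply Finset.sum_congr rfl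
  intro m hm
  simp only [Finset.mem_range] at hm
  have h1 : ((n:ℤ) - (m:ℤ)).toNat = n - m := by omega
  have h2 : h (m : ℤ) = (a:ℤ) * (r:ℤ) ^ m := by
    rw [hh]; simp
  simp only [Function.Embedding.coeFn_mk, h1, h2]

lemma sum_pairs (f : ℕ → ℤ) (n : ℕ) :
    ∑ j ∈ Finset.range (2*n), f j = ∑ i ∈ Finset.range n, (f (2*i) + f (2*i+1)) := by
  induction n with
  | zero => simp
  | succ n ih =>
      have : 2 * (n+1) = (2*n + 1) + 1 := by ring
      rw [this, Finset.sum_range_succ, Finset.sum_range_succ, Finset.sum_range_succ, ih]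
      ring

lemma choose_key (r j n : ℕ) (h1 : 1 ≤ j) (hjn : j ≤ n) (hnr : n ≤ r) :
    (r - j + 1).choose (n - j + 1) ≤ r * (r - j).choose (n - j) := by
  have h := Nat.add_one_mul_choose_eq (r - j) (n - j)
  have h2 : (r - j + 1).choose (n - j + 1) ≤ (r - j + 1) * (r - j).choose (n - j) := by
    calc (r - j + 1).choose (n - j + 1) ≤ (r - j + 1).choose (n - j + 1) * (n - j + 1) :=
          Nat.le_mul_of_pos_right _ (by omega)
      _ = (r - j + 1) * (r - j).choose (n - j) := by omega
  calc (r - j + 1).choose (n - j + 1) ≤ (r - j + 1) * (r - j).choose (n - j) := h2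
    _ ≤ r * (r - j).choose (n - j) := Nat.mul_le_mul_right _ (by omega)

lemma pair_nonneg (a r n j : ℕ) (hjn : j + 1 ≤ n) (hnr : n ≤ r)
    (hpar : (n - (j+1)) % 2 = 0) :
    0 ≤ (-1:ℤ)^(n-j) * ((r-j).choose (n-j) : ℤ) * ((a:ℤ) * (r:ℤ)^j)
      + (-1:ℤ)^(n-(j+1)) * ((r-(j+1)).choose (n-(j+1)) : ℤ) * ((a:ℤ) * (r:ℤ)^(j+1)) := by
  have e1 : n - j = (n - (j+1)) + 1 := by omega
  have e2 : r - j = (r - (j+1)) + 1 := by omega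
  have s1 : (-1:ℤ)^(n-(j+1)) = 1 := Even.neg_one_pow (Nat.even_iff.mpr hpar)
  have s2 : (-1:ℤ)^((n-(j+1))+1) = -1 := by rw [pow_succ, s1]; ring
  have hkey := choose_key r (j+1) n (by omega) hjn hnr
  have hkey' : ((((r-(j+1))+1).choose ((n-(j+1))+1) : ℕ) : ℤ)
      ≤ (r:ℤ) * (((r-(j+1)).choose (n-(j+1)) : ℕ) : ℤ) := by exact_mod_cast hkey
  have hnn : (0:ℤ) ≤ (a:ℤ) * (r:ℤ)^j := by positivity
  have hmul := mul_le_mul_of_nonneg_right hkey' hnn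
  rw [e1, e2, s2, s1, pow_succ]
  linarith [hmul]

lemma S_nonneg (a r n : ℕ) (hn : n ≤ r) :
    0 ≤ ∑ m ∈ Finset.range (n+1), (-1:ℤ)^(n-m) * (((r-m).choose (n-m) : ℕ) : ℤ)
        * ((a:ℤ) * (r:ℤ)^m) := by
  rcases Nat.even_or_odd n with he | ho
  · obtain ⟨c, hc⟩ := he
    subst hc
    rw [Finset.sum_range_succ']
    have h0 : (0:ℤ) ≤ (-1:ℤ)^(c+c-0) * (((r-0).choose (c+c-0) : ℕ) : ℤ)
        * ((a:ℤ) * (r:ℤ)^0) := by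
      have hs1 : (-1:ℤ)^(c+c-0) = 1 := Even.neg_one_pow ⟨c, by omega⟩
      rw [hs1]
      positivity
    have hs : (0:ℤ) ≤ ∑ i ∈ Finset.range (c+c),
        (-1:ℤ)^(c+c-(i+1)) * (((r-(i+1)).choose (c+c-(i+1)) : ℕ) : ℤ)
        * ((a:ℤ) * (r:ℤ)^(i+1)) := by
      rw [show c+c = 2*c by ring]
      rw [sum_pairs (fun i => (-1:ℤ)^(2*c-(i+1)) * (((r-(i+1)).choose (2*c-(i+1)) : ℕ) : ℤ)
        * ((a:ℤ) * (r:ℤ)^(i+1))) c]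
      apply Finset.sum_nonneg
      intro i hi
      simp only [Finset.mem_range] at hi
      exact pair_nonneg a r (2*c) (2*i+1) (by omega) (by omega) (by omega)
    exact add_nonneg hs h0
  · obtain ⟨c, hc⟩ := ho
    subst hc
    rw [show 2*c+1+1 = 2*(c+1) by ring]
    rw [sum_pairs (fun m => (-1:ℤ)^(2*c+1-m) * (((r-m).choose (2*c+1-m) : ℕ) : ℤ)
        * ((a:ℤ) * (r:ℤ)^m)) (c+1)]
    apply Finset.sum_nonneg
    intro i hi
    simp only [Finset.mem_range] at hi
    exact pair_nonneg a r (2*c+1) (2*i) (by omega) (by omega) (by omega)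

theorem qdepth_geometric (a r : ℕ) (ha : 0 < a) (hr : 0 < r)
    (h : ℤ → ℤ) (hh : ∀ j : ℤ, h j = if 0 ≤ j then (a : ℤ) * (r : ℤ) ^ j.toNat else 0) :
    IsGreatest (qdepthSet h) (r : ℤ) := by
  constructor
  · intro k hk
    rcases lt_or_ge k 0 with hk0 | hk0
    · have hz : beta h (r:ℤ) k = 0 := by
        apply finsum_mem_of_eqOn_zero
        intro j hj
        have hj0 : h j = 0 := by
          rw [hh, if_neg]
          simp only [Set.mem_Iic] at hj
          omega
        simp only [hj0, mul_zero, Pi.zero_apply]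
      rw [hz]
    · obtain ⟨n, rfl⟩ := Int.eq_ofNat_of_zero_le hk0
      have hn : n ≤ r := by exact_mod_cast hk
      rw [beta_eq a r h hh _ n]
      refine le_of_le_of_eq (S_nonneg a r n hn) (Finset.sum_congr rfl ?_)
      intro m hm
      simp only [Finset.mem_range] at hm
      have : ((r:ℤ) - (m:ℤ)).toNat = r - m := by omega
      rw [this]
  · intro d hd
    by_contra hlt
    push_neg at hlt
    have h1 := hd 1 (by omega)
    have hb : beta h d 1 = (a:ℤ) * (r:ℤ) - (d.toNat : ℤ) * a := by
      have e1 : (1 : ℤ) = ((1:ℕ) : ℤ) := rfl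
      rw [e1, beta_eq a r h hh d 1]
      rw [Finset.sum_range_succ, Finset.sum_range_succ, Finset.sum_range_zero]
      simp [Nat.choose_one_right]
      ring
    rw [hb] at h1
    have hdt : (r:ℤ) + 1 ≤ (d.toNat : ℤ) := by omega
    nlinarith [h1, ha, hr]
end

section
/- Let d ≥ 1 be an integer and define h(j) = d!/(d−j)! for 0 ≤ j ≤ d and h(j) = 0 otherwise. Then qdepth(h) = d. -/
open Finset

private lemma natCast_icc (K : ℕ) :
    Finset.Icc (0:ℤ) (K:ℤ) = Finset.map ⟨(Nat.cast : ℕ → ℤ), Nat.cast_injective⟩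
      (Finset.range (K+1)) := by
  ext j
  simp only [Finset.mem_Icc, Finset.mem_map, Finset.mem_range, Function.Embedding.coeFn_mk]
  constructor
  · rintro ⟨h1, h2⟩
    exact ⟨j.toNat, by omega, by omega⟩
  · rintro ⟨a, ha, rfl⟩
    omega

private lemma beta_eq_s13 (h : ℤ → ℤ) (h0 : ∀ j : ℤ, j < 0 → h j = 0) (e : ℤ) (K : ℕ) :
    beta h e K = ∑ J ∈ Finset.range (K+1),
      (-1 : ℤ) ^ (K - J) * ((e - J).toNat.choose (K - J) : ℤ) * h J := by
  have step : beta h e K = ∑ j ∈ Finset.Icc (0:ℤ) K,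
      (-1:ℤ)^((K:ℤ) - j).toNat * (((e-j).toNat.choose ((K:ℤ)-j).toNat : ℕ) : ℤ) * h j := by
    apply finsum_mem_eq_sum_of_inter_support_eq
    ext j
    simp only [Set.mem_inter_iff, Set.mem_Iic, Finset.coe_Icc, Set.mem_Icc,
      Function.mem_support]
    constructor
    · rintro ⟨hj, hs⟩
      refine ⟨⟨?_, hj⟩, hs⟩
      by_contra hneg
      exact hs (by rw [h0 j (by omega)]; ring)
    · rintro ⟨⟨_, hj⟩, hs⟩; exact ⟨hj, hs⟩
  rw [step, natCast_icc, Finset.sum_map]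
  apply Finset.sum_congr rfl
  intro J hJ
  simp only [Finset.mem_range] at hJ
  have h1 : ((K:ℤ) - (J:ℤ)).toNat = K - J := by omega
  simp only [Function.Embedding.coeFn_mk, h1]

private lemma key_nat (d K i : ℕ) (hiK : i ≤ K) (hKd : K ≤ d) :
    (d - K + i).choose i * d.descFactorial (K - i) = d.choose K * (i+1).ascFactorial (K - i) := by
  apply Nat.eq_of_mul_eq_mul_right (show 0 < i.factorial * (d-K).factorial by positivity)
  have h1 : (d - K + i).choose i * i.factorial * (d - K).factorial = (d - K + i).factorial := by
    have := Nat.choose_mul_factorial_mul_factorial (show i ≤ d - K + i by omega)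
    rwa [show d - K + i - i = d - K by omega] at this
  have h2 : (d - K + i).factorial * d.descFactorial (K - i) = d.factorial := by
    have := Nat.factorial_mul_descFactorial (show K - i ≤ d by omega)
    rwa [show d - (K - i) = d - K + i by omega] at this
  have h3 : i.factorial * (i+1).ascFactorial (K - i) = K.factorial := by
    have := Nat.factorial_mul_ascFactorial i (K - i)
    rwa [show i + (K - i) = K by omega] at this
  have h4 := Nat.choose_mul_factorial_mul_factorial hKd
  have L : (d-K+i).choose i * d.descFactorial (K-i) * (i.factorial * (d-K).factorial)
      = d.factorial := by rw [← h2, ← h1]; ring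
  have R : d.choose K * (i+1).ascFactorial (K-i) * (i.factorial * (d-K).factorial)
      = d.factorial := by rw [← h4, ← h3]; ring
  rw [L, R]

private lemma beta_at_d (d : ℕ) (h : ℤ → ℤ)
    (hh : ∀ j : ℤ, h j = if 0 ≤ j ∧ j ≤ (d : ℤ) then (d.descFactorial j.toNat : ℤ) else 0)
    (K : ℕ) (hK : K ≤ d) :
    beta h d K = d.choose K * numDerangements K := by
  have h0 : ∀ j : ℤ, j < 0 → h j = 0 := by
    intro j hj; rw [hh, if_neg (by omega)]
  rw [beta_eq_s13 h h0 d K]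
  calc ∑ J ∈ range (K+1), (-1:ℤ)^(K-J) * (((d:ℤ) - J).toNat.choose (K-J) : ℤ) * h J
      = ∑ i ∈ range (K+1), (-1:ℤ)^(K-(K+1-1-i)) *
          (((d:ℤ) - (K+1-1-i : ℕ)).toNat.choose (K-(K+1-1-i)) : ℤ) * h (K+1-1-i : ℕ) :=
        (Finset.sum_range_reflect _ _).symm
    _ = ∑ i ∈ range (K+1), (d.choose K : ℤ) * ((-1:ℤ)^i * ((i+1).ascFactorial (K-i) : ℤ)) := by
        apply Finset.sum_congr rfl
        intro i hi
        simp only [Finset.mem_range, Nat.add_sub_cancel] at hi ⊢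
        have hiK : i ≤ K := by omega
        have e2 : K - (K - i) = i := by omega
        have e3 : ((d:ℤ) - ((K - i : ℕ) : ℤ)).toNat = d - K + i := by omega
        rw [hh, if_pos (show (0:ℤ) ≤ ((K - i : ℕ) : ℤ) ∧ ((K - i : ℕ) : ℤ) ≤ (d:ℤ) by omega),
          e2, e3, Int.toNat_natCast]
        have hkey : (((d-K+i).choose i : ℕ) : ℤ) * (d.descFactorial (K-i) : ℤ)
            = ((d.choose K : ℕ) : ℤ) * ((i+1).ascFactorial (K-i) : ℤ) := by
          exact_mod_cast congrArg (Nat.cast : ℕ → ℤ) (key_nat d K i hiK hK)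
        linear_combination (-1:ℤ)^i * hkey
    _ = (d.choose K : ℤ) * numDerangements K := by
        rw [← Finset.mul_sum, ← numDerangements_sum]

private lemma upper (d : ℕ) (h : ℤ → ℤ)
    (hh : ∀ j : ℤ, h j = if 0 ≤ j ∧ j ≤ (d : ℤ) then (d.descFactorial j.toNat : ℤ) else 0)
    (e : ℤ) (he : ∀ k ≤ e, 0 ≤ beta h e k) : e ≤ d := by
  by_contra hlt
  push_neg at hlt
  have h0 : ∀ j : ℤ, j < 0 → h j = 0 := by
    intro j hj; rw [hh, if_neg (by omega)]
  set E := e.toNat with hEdef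
  have hdE : d + 1 ≤ E := by omega
  have hEe : (E : ℤ) = e := by omega
  have hb0 : beta h e 0 = 1 := by
    have h1 := beta_eq_s13 h h0 e 0
    simp only [Nat.cast_zero] at h1
    rw [h1]
    simp [hh]
  set f : ℕ → ℤ := fun k => ((E - k).choose (d+1-k) : ℤ) * beta h e k with hf
  have hfnonneg : ∀ k ∈ range (d+2), 0 ≤ f k := by
    intro k hk
    simp only [Finset.mem_range] at hk
    exact mul_nonneg (by positivity) (he k (by omega))
  have hS0 : 0 < ∑ k ∈ range (d+2), f k := by
    have h1 : f 0 ≤ ∑ k ∈ range (d+2), f k :=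
      Finset.single_le_sum hfnonneg (by simp)
    have h2 : 0 < f 0 := by
      simp only [hf, Nat.cast_zero, Nat.sub_zero, hb0, mul_one]
      exact_mod_cast Nat.choose_pos hdE
    linarith
  have hSeq : ∑ k ∈ range (d+2), f k = 0 := by
    have expand : ∀ k ∈ range (d+2), f k =
        ∑ J ∈ range (d+2), (if J ≤ k then
          ((E - k).choose (d+1-k) : ℤ) *
            ((-1:ℤ)^(k-J) * ((E - J).choose (k-J) : ℤ) * h J) else 0) := by
      intro k hk
      simp only [Finset.mem_range] at hk
      rw [hf]
      simp only []
      rw [beta_eq_s13 h h0 e k, Finset.mul_sum, ← Finset.sum_filter,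
        show (range (d+2)).filter (fun J => J ≤ k) = range (k+1) by
          ext J; simp only [Finset.mem_filter, Finset.mem_range]; omega]
      apply Finset.sum_congr rfl
      intro J hJ
      simp only [Finset.mem_range] at hJ
      have : (e - (J:ℤ)).toNat = E - J := by omega
      rw [this]
    rw [Finset.sum_congr rfl expand, Finset.sum_comm]
    apply Finset.sum_eq_zero
    intro J hJ
    simp only [Finset.mem_range] at hJ
    rw [← Finset.sum_filter,
      show (range (d+2)).filter (fun k => J ≤ k) = Finset.Ico J (d+2) by
        ext k; simp only [Finset.mem_filter, Finset.mem_range, Finset.mem_Ico]; omega]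
    by_cases hJd : J = d + 1
    · apply Finset.sum_eq_zero
      intro k hk
      rw [hh, if_neg (by omega)]
      ring
    · have hJle : J ≤ d := by omega
      rw [Finset.sum_Ico_eq_sum_range]
      have hterm : ∀ a ∈ range (d+2-J),
          ((E - (J+a)).choose (d+1-(J+a)) : ℤ) *
            ((-1:ℤ)^((J+a)-J) * ((E - J).choose ((J+a)-J) : ℤ) * h J)
          = (h J * ((E-J).choose (d+1-J) : ℤ)) *
              ((-1:ℤ)^a * (((d+1-J).choose a : ℕ) : ℤ)) := by
        intro a ha
        simp only [Finset.mem_range] at ha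
        have e1 : J + a - J = a := by omega
        have e2 : E - (J+a) = E - J - a := by omega
        have e3 : d+1-(J+a) = d+1-J-a := by omega
        rw [e1, e2, e3]
        have hc := Nat.choose_mul (n := E-J) (show a ≤ d+1-J by omega)
        have hc' : (((E-J).choose (d+1-J) : ℕ) : ℤ) * (((d+1-J).choose a : ℕ) : ℤ)
            = (((E-J).choose a : ℕ) : ℤ) * (((E-J-a).choose (d+1-J-a) : ℕ) : ℤ) := by
          exact_mod_cast hc
        linear_combination (-(-1:ℤ)^a * h J) * hc'
      rw [Finset.sum_congr rfl hterm, ← Finset.mul_sum,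
        show d+2-J = (d+1-J)+1 by omega,
        Int.alternating_sum_range_choose_of_ne (show d+1-J ≠ 0 by omega), mul_zero]
  omega

theorem qdepth_descFactorial (d : ℕ) (hd : 1 ≤ d) (h : ℤ → ℤ)
    (hh : ∀ j : ℤ, h j = if 0 ≤ j ∧ j ≤ (d : ℤ) then (d.descFactorial j.toNat : ℤ) else 0) :
    IsGreatest (qdepthSet h) (d : ℤ) := by
  constructor
  · intro k hk
    by_cases hkneg : k < 0
    · have : beta h (d : ℤ) k = 0 := by
        apply finsum_mem_of_eqOn_zero
        intro j hj
        simp only [Set.mem_Iic] at hj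
        show (-1:ℤ) ^ (k - j).toNat * (((d:ℤ) - j).toNat.choose (k - j).toNat : ℤ) * h j = 0
        rw [hh, if_neg (by omega)]
        ring
      rw [this]
    · push_neg at hkneg
      obtain ⟨K, rfl⟩ : ∃ K : ℕ, k = (K : ℤ) := ⟨k.toNat, by omega⟩
      rw [beta_at_d d h hh K (by omega)]
      positivity
  · intro e hee
    exact upper d h hh e hee
end

section
/- Let a, b be positive integers and h(j) = a·j + b for j ≥ 0, h(j) = 0 for j < 0. Then qdepth(h) equals: 1 if a < b; 2 if b ≤ a < 2b; 3 if 2b ≤ a < 3b; 4 if 3b ≤ a ≤ 4b; and 3 if a > 4b. -/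
section aux
variable (h : ℤ → ℤ)

lemma beta_of_neg (hneg : ∀ j < (0:ℤ), h j = 0) (d k : ℤ) (hk : k < 0) : beta h d k = 0 := by
  apply finsum_mem_of_eqOn_zero
  intro j hj
  have : h j = 0 := hneg j (lt_of_le_of_lt hj hk)
  simp [this]

lemma beta_eq_s18 (hneg : ∀ j < (0:ℤ), h j = 0) (d k : ℤ) :
    beta h d k = ∑ j ∈ Finset.Icc (0:ℤ) k,
      (-1 : ℤ) ^ (k - j).toNat * ((d - j).toNat.choose (k - j).toNat : ℤ) * h j := by
  apply finsum_mem_eq_sum_of_inter_support_eq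
  ext j
  simp only [Set.mem_inter_iff, Function.mem_support, Set.mem_Iic, Finset.coe_Icc, Set.mem_Icc]
  constructor
  · rintro ⟨hjk, hsupp⟩
    refine ⟨⟨?_, hjk⟩, hsupp⟩
    by_contra hneg0
    push_neg at hneg0
    exact hsupp (by rw [hneg j hneg0]; ring)
  · rintro ⟨⟨_, hjk⟩, hsupp⟩; exact ⟨hjk, hsupp⟩

lemma beta_ofNat (hneg : ∀ j < (0:ℤ), h j = 0) (d : ℤ) (n : ℕ) :
    beta h d (n : ℤ) = ∑ j ∈ Finset.range (n+1),
      (-1:ℤ)^(n-j) * ((d - j).toNat.choose (n - j) : ℤ) * h j := by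
  rw [beta_eq_s18 h hneg]
  have hmap : Finset.Icc (0:ℤ) (n:ℤ)
      = (Finset.range (n+1)).map ⟨(Nat.cast : ℕ → ℤ), Nat.cast_injective⟩ := by
    ext x
    simp only [Finset.mem_Icc, Finset.mem_map, Finset.mem_range, Function.Embedding.coeFn_mk]
    constructor
    · rintro ⟨h1, h2⟩; exact ⟨x.toNat, by omega, by omega⟩
    · rintro ⟨a, ha, rfl⟩; constructor <;> [positivity; exact_mod_cast Nat.lt_succ_iff.mp ha]
  rw [hmap, Finset.sum_map]
  apply Finset.sum_congr rfl
  intro j hj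
  simp only [Finset.mem_range] at hj
  have e1 : ((n:ℤ) - (j:ℤ)).toNat = n - j := by omega
  simp [e1]

lemma beta_rec (hneg : ∀ j < (0:ℤ), h j = 0) (d k : ℤ) (hk0 : 0 ≤ k) (hkd : k ≤ d + 1) :
    beta h (d+1) k = beta h d k - beta h d (k-1) := by
  rw [beta_eq_s18 h hneg, beta_eq_s18 h hneg, beta_eq_s18 h hneg]
  have step : ∀ f : ℤ → ℤ, ∑ j ∈ Finset.Icc (0:ℤ) k, f j
      = ∑ j ∈ Finset.Icc (0:ℤ) (k-1), f j + f k := by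
    intro f
    have hins : Finset.Icc (0:ℤ) k = insert k (Finset.Icc 0 (k-1)) := by
      ext x; simp only [Finset.mem_Icc, Finset.mem_insert]; omega
    rw [hins, Finset.sum_insert (by simp only [Finset.mem_Icc]; omega), add_comm]
  rw [step, step]
  have key : ∀ j ∈ Finset.Icc (0:ℤ) (k-1),
      (-1:ℤ)^(k-j).toNat * ((d+1-j).toNat.choose (k-j).toNat : ℤ) * h j
      = (-1:ℤ)^(k-j).toNat * ((d-j).toNat.choose (k-j).toNat : ℤ) * h j
        - (-1:ℤ)^(k-1-j).toNat * ((d-j).toNat.choose (k-1-j).toNat : ℤ) * h j := by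
    intro j hj
    simp only [Finset.mem_Icc] at hj
    have h1 : (d+1-j).toNat = (d-j).toNat + 1 := by omega
    have h2 : (k-j).toNat = (k-1-j).toNat + 1 := by omega
    rw [h1, h2, Nat.choose_succ_succ]
    push_cast
    ring
  rw [Finset.sum_congr rfl key, Finset.sum_sub_distrib]
  have hk1 : (k - k).toNat = 0 := by omega
  simp only [sub_self, hk1, Int.toNat_zero, pow_zero, Nat.choose_zero_right, Nat.cast_one, one_mul]
  ring

lemma step_down (hneg : ∀ j < (0:ℤ), h j = 0) (h0 : 0 ≤ h 0) (d : ℤ)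
    (hmem : (d+1) ∈ qdepthSet h) : d ∈ qdepthSet h := by
  have H : ∀ n : ℕ, ∀ k : ℤ, 0 ≤ k → k ≤ d → k.toNat = n → 0 ≤ beta h d k := by
    intro n
    induction n using Nat.strong_induction_on with
    | _ n ih =>
      intro k hk0 hkd hkn
      have hrec := beta_rec h hneg d k hk0 (by omega)
      have h1 : 0 ≤ beta h (d+1) k := hmem k (by omega)
      rcases lt_or_ge (k-1) 0 with hk1 | hk1
      · have hz := beta_of_neg h hneg d (k-1) hk1
        linarith
      · have h2 : 0 ≤ beta h d (k-1) := ih (k-1).toNat (by omega) (k-1) hk1 (by omega) rfl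
        linarith
  intro k hk
  rcases lt_or_ge k 0 with hk0 | hk0
  · rw [beta_of_neg h hneg d k hk0]
  · exact H k.toNat k hk0 hk rfl

lemma down (hneg : ∀ j < (0:ℤ), h j = 0) (h0 : 0 ≤ h 0) :
    ∀ n : ℕ, ∀ d : ℤ, (d + n) ∈ qdepthSet h → d ∈ qdepthSet h := by
  intro n
  induction n with
  | zero => intro d hd; simpa using hd
  | succ m ih =>
    intro d hd
    have : (d + 1 + (m:ℤ)) ∈ qdepthSet h := by
      have e : d + ((m+1 : ℕ) : ℤ) = d + 1 + (m:ℤ) := by push_cast; ring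
      rwa [e] at hd
    exact step_down h hneg h0 d (ih (d+1) this)

lemma down_le (hneg : ∀ j < (0:ℤ), h j = 0) (h0 : 0 ≤ h 0) {e d' : ℤ} (he : e ∈ qdepthSet h) (hle : d' ≤ e) :
    d' ∈ qdepthSet h := by
  have : (d' + ((e - d').toNat : ℤ)) ∈ qdepthSet h := by
    have : d' + ((e - d').toNat : ℤ) = e := by omega
    rwa [this]
  exact down h hneg h0 _ d' this

end aux



set_option maxHeartbeats 1000000 in
theorem qdepth_arithmetic (a b : ℤ) (ha : 0 < a) (hb : 0 < b)
    (h : ℤ → ℤ) (hh : ∀ j : ℤ, h j = if 0 ≤ j then a * j + b else 0)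
    (d : ℤ) (hd : IsGreatest (qdepthSet h) d) :
    (a < b → d = 1) ∧ (b ≤ a ∧ a < 2 * b → d = 2) ∧ (2 * b ≤ a ∧ a < 3 * b → d = 3) ∧
      (3 * b ≤ a ∧ a ≤ 4 * b → d = 4) ∧ (4 * b < a → d = 3) := by
  have hneg : ∀ j < (0:ℤ), h j = 0 := fun j hj => by rw [hh]; simp [not_le.mpr hj]
  have hv : ∀ n : ℕ, h (n:ℤ) = a * n + b := fun n => by rw [hh]; simp
  have h0 : 0 ≤ h 0 := by rw [hh 0]; simp; omega
  have e10 : beta h 1 0 = b := by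
    have := beta_ofNat h hneg 1 0
    norm_num [Finset.sum_range_succ, hv, Int.reduceToNat, Nat.choose] at this
    linarith [this]
  have e11 : beta h 1 1 = a := by
    have := beta_ofNat h hneg 1 1
    norm_num [Finset.sum_range_succ, hv, Int.reduceToNat, Nat.choose] at this
    linarith [this]
  have e20 : beta h 2 0 = b := by
    have := beta_ofNat h hneg 2 0
    norm_num [Finset.sum_range_succ, hv, Int.reduceToNat, Nat.choose] at this
    linarith [this]
  have e21 : beta h 2 1 = a - b := by
    have := beta_ofNat h hneg 2 1
    norm_num [Finset.sum_range_succ, hv, Int.reduceToNat, Nat.choose] at this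
    linarith [this]
  have e22 : beta h 2 2 = a + b := by
    have := beta_ofNat h hneg 2 2
    norm_num [Finset.sum_range_succ, hv, Int.reduceToNat, Nat.choose] at this
    simp [Int.reduceToNat, Nat.choose] at this
    linarith [this]
  have e30 : beta h 3 0 = b := by
    have := beta_ofNat h hneg 3 0
    norm_num [Finset.sum_range_succ, hv, Int.reduceToNat, Nat.choose] at this
    linarith [this]
  have e31 : beta h 3 1 = a - 2*b := by
    have := beta_ofNat h hneg 3 1
    norm_num [Finset.sum_range_succ, hv, Int.reduceToNat, Nat.choose] at this
    linarith [this]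
  have e32 : beta h 3 2 = 2*b := by
    have := beta_ofNat h hneg 3 2
    norm_num [Finset.sum_range_succ, hv, Int.reduceToNat, Nat.choose] at this
    simp [Int.reduceToNat, Nat.choose] at this
    linarith [this]
  have e33 : beta h 3 3 = 2*a := by
    have := beta_ofNat h hneg 3 3
    norm_num [Finset.sum_range_succ, hv, Int.reduceToNat, Nat.choose] at this
    simp [Int.reduceToNat, Nat.choose] at this
    linarith [this]
  have e40 : beta h 4 0 = b := by
    have := beta_ofNat h hneg 4 0
    norm_num [Finset.sum_range_succ, hv, Int.reduceToNat, Nat.choose] at this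
    linarith [this]
  have e41 : beta h 4 1 = a - 3*b := by
    have := beta_ofNat h hneg 4 1
    norm_num [Finset.sum_range_succ, hv, Int.reduceToNat, Nat.choose] at this
    linarith [this]
  have e42 : beta h 4 2 = -a + 4*b := by
    have := beta_ofNat h hneg 4 2
    norm_num [Finset.sum_range_succ, hv, Int.reduceToNat, Nat.choose] at this
    simp [Int.reduceToNat, Nat.choose] at this
    linarith [this]
  have e43 : beta h 4 3 = 2*a - 2*b := by
    have := beta_ofNat h hneg 4 3
    norm_num [Finset.sum_range_succ, hv, Int.reduceToNat, Nat.choose] at this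
    simp [Int.reduceToNat, Nat.choose] at this
    linarith [this]
  have e44 : beta h 4 4 = 2*a + b := by
    have := beta_ofNat h hneg 4 4
    norm_num [Finset.sum_range_succ, hv, Int.reduceToNat, Nat.choose] at this
    simp [Int.reduceToNat, Nat.choose] at this
    linarith [this]
  have e51 : beta h 5 1 = a - 4*b := by
    have := beta_ofNat h hneg 5 1
    norm_num [Finset.sum_range_succ, hv, Int.reduceToNat, Nat.choose] at this
    linarith [this]
  have e52 : beta h 5 2 = -2*a + 7*b := by
    have := beta_ofNat h hneg 5 2
    norm_num [Finset.sum_range_succ, hv, Int.reduceToNat, Nat.choose] at this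
    simp [Int.reduceToNat, Nat.choose] at this
    linarith [this]
  -- a bound from non-membership of D+1
  have notmem : ∀ D E : ℤ, E = D + 1 → (∃ k, k ≤ E ∧ beta h E k < 0) → d ≤ D := by
    rintro D E hE ⟨k, hk, hneg'⟩
    by_contra hcon
    push_neg at hcon
    have hmem : E ∈ qdepthSet h := down_le h hneg h0 hd.1 (by omega)
    have := hmem k hk
    omega
  refine ⟨?_, ?_, ?_, ?_, ?_⟩
  · intro hab
    have mem1 : (1:ℤ) ∈ qdepthSet h := by
      intro k hk
      rcases lt_or_ge k 0 with hk0 | hk0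
      · simp [beta_of_neg h hneg _ _ hk0]
      · interval_cases k
        · rw [e10]; omega
        · rw [e11]; omega
    have h1 := hd.2 mem1
    have h2 : d ≤ 1 := notmem 1 2 (by norm_num) ⟨1, by omega, by rw [e21]; omega⟩
    omega
  · rintro ⟨hba, hab⟩
    have mem2 : (2:ℤ) ∈ qdepthSet h := by
      intro k hk
      rcases lt_or_ge k 0 with hk0 | hk0
      · simp [beta_of_neg h hneg _ _ hk0]
      · interval_cases k
        · rw [e20]; omega
        · rw [e21]; omega
        · rw [e22]; omega
    have h1 := hd.2 mem2
    have h2 : d ≤ 2 := notmem 2 3 (by norm_num) ⟨1, by omega, by rw [e31]; omega⟩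
    omega
  · rintro ⟨hba, hab⟩
    have mem3 : (3:ℤ) ∈ qdepthSet h := by
      intro k hk
      rcases lt_or_ge k 0 with hk0 | hk0
      · simp [beta_of_neg h hneg _ _ hk0]
      · interval_cases k
        · rw [e30]; omega
        · rw [e31]; omega
        · rw [e32]; omega
        · rw [e33]; omega
    have h1 := hd.2 mem3
    have h2 : d ≤ 3 := notmem 3 4 (by norm_num) ⟨1, by omega, by rw [e41]; omega⟩
    omega
  · rintro ⟨hba, hab⟩
    have mem4 : (4:ℤ) ∈ qdepthSet h := by
      intro k hk
      rcases lt_or_ge k 0 with hk0 | hk0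
      · simp [beta_of_neg h hneg _ _ hk0]
      · interval_cases k
        · rw [e40]; omega
        · rw [e41]; omega
        · rw [e42]; omega
        · rw [e43]; omega
        · rw [e44]; omega
    have h1 := hd.2 mem4
    have h2 : d ≤ 4 := by
      rcases le_or_gt (2*a) (7*b) with hc | hc
      · exact notmem 4 5 (by norm_num) ⟨1, by omega, by rw [e51]; omega⟩
      · exact notmem 4 5 (by norm_num) ⟨2, by omega, by rw [e52]; omega⟩
    omega
  · intro hab
    have mem3 : (3:ℤ) ∈ qdepthSet h := by
      intro k hk
      rcases lt_or_ge k 0 with hk0 | hk0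
      · simp [beta_of_neg h hneg _ _ hk0]
      · interval_cases k
        · rw [e30]; omega
        · rw [e31]; omega
        · rw [e32]; omega
        · rw [e33]; omega
    have h1 := hd.2 mem3
    have h2 : d ≤ 3 := notmem 3 4 (by norm_num) ⟨2, by omega, by rw [e42]; omega⟩
    omega
end
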